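/- Let X be a finite-dimensional real Hilbert space and β : X → X a continuous map which is strictly monotone, i.e. ⟨β(ξ) − β(ξ̄), ξ − ξ̄⟩ > 0 whenever ξ ≠ ξ̄. If (ξ_n) ⊂ X and ξ ∈ X satisfy ⟨β(ξ_n) − β(ξ), ξ_n − ξ⟩ → 0, then ξ_n → ξ in X. -/
import Mathlib


open Filter
open scoped RealInnerProductSpace

theorem stmt_7 (X : Type*) [NormedAddCommGroup X] [InnerProductSpace ℝ X]
    [FiniteDimensional ℝ X] (β : X → X) (hc : Continuous β)
    (hmono : ∀ ξ ξ' : X, ξ ≠ ξ' → 0 < ⟪β ξ - β ξ', ξ - ξ'⟫)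
    (ξn : ℕ → X) (ξ : X)
    (h : Tendsto (fun n => ⟪β (ξn n) - β ξ, ξn n - ξ⟫) atTop (nhds 0)) :
    Tendsto ξn atTop (nhds ξ) := by
  rcases subsingleton_or_nontrivial X with hs | hn
  · exact tendsto_const_nhds.congr fun n => (Subsingleton.elim _ _)
  set f : X → ℝ := fun η => ⟪β η - β ξ, η - ξ⟫ with hf
  have hfc : Continuous f :=
    Continuous.inner (hc.sub continuous_const) (continuous_id.sub continuous_const)
  rw [Metric.tendsto_atTop]
  intro ε hε
  have hsph : (Metric.sphere ξ ε).Nonempty := NormedSpace.sphere_nonempty.2 hε.le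
  obtain ⟨η0, hη0, hmin'⟩ := (isCompact_sphere ξ ε).exists_isMinOn hsph hfc.continuousOn
  have hmin : ∀ y ∈ Metric.sphere ξ ε, f η0 ≤ f y := fun y hy => hmin' hy
  set m := f η0 with hmdef
  have hη0ne : η0 ≠ ξ := by
    intro h'
    rw [Metric.mem_sphere, h', dist_self] at hη0
    exact hε.ne hη0
  have hm : 0 < m := hmono η0 ξ hη0ne
  have key : ∀ η : X, ε ≤ ‖η - ξ‖ → m ≤ f η := by
    intro η hη
    have hnorm : 0 < ‖η - ξ‖ := lt_of_lt_of_le hε hη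
    have hne : η ≠ ξ := by
      intro h'; rw [h', sub_self, norm_zero] at hnorm; exact lt_irrefl 0 hnorm
    set t : ℝ := ε / ‖η - ξ‖ with ht
    have ht0 : 0 < t := div_pos hε hnorm
    have ht1 : t ≤ 1 := (div_le_one hnorm).2 hη
    set η' : X := ξ + t • (η - ξ) with hη'
    have hη'sub : η' - ξ = t • (η - ξ) := by rw [hη']; abel
    have hη's : ‖η' - ξ‖ = ε := by
      rw [hη'sub, norm_smul, Real.norm_eq_abs, abs_of_pos ht0, ht]
      field_simp
    have hη'ne : η' ≠ ξ := by
      intro h'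
      rw [h', sub_self, norm_zero] at hη's
      exact hε.ne hη's
    have hmη' : m ≤ f η' := hmin η' (by rw [Metric.mem_sphere, dist_eq_norm]; exact hη's)
    have hfη'pos : 0 < f η' := hmono η' ξ hη'ne
    -- term2 : ⟪β η' - β ξ, η - ξ⟫
    have hterm2 : t * ⟪β η' - β ξ, η - ξ⟫ = f η' := by
      simp only [hf]
      rw [hη'sub, real_inner_smul_right]
    have hterm2ge : m ≤ ⟪β η' - β ξ, η - ξ⟫ := by
      have h1 : f η' ≤ ⟪β η' - β ξ, η - ξ⟫ := by
        rw [← hterm2]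
        nlinarith [hterm2, hfη'pos]
      linarith
    -- term1 : ⟪β η - β η', η - ξ⟫ ≥ 0
    have hterm1 : 0 ≤ ⟪β η - β η', η - ξ⟫ := by
      rcases eq_or_lt_of_le ht1 with h1 | h1
      · have : η' = η := by rw [hη', h1, one_smul]; abel
        rw [this, sub_self, inner_zero_left]
      · have hsub : η - η' = (1 - t) • (η - ξ) := by
          rw [hη', sub_smul, one_smul]; abel
        have hneη' : η ≠ η' := by
          intro h'
          have : (0:X) = (1 - t) • (η - ξ) := by rw [← hsub, h', sub_self]
          have h2 : (1 - t) • (η - ξ) ≠ 0 :=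
            smul_ne_zero (by linarith) (sub_ne_zero.2 hne)
          exact h2 this.symm
        have hpos := hmono η η' hneη'
        rw [hsub, real_inner_smul_right] at hpos
        nlinarith
    have hdecomp : f η = ⟪β η - β η', η - ξ⟫ + ⟪β η' - β ξ, η - ξ⟫ := by
      simp only [hf]
      rw [← inner_add_left]
      congr 1
      abel
    rw [hdecomp]
    linarith
  have hev : ∀ᶠ n in atTop, f (ξn n) < m := h.eventually (eventually_lt_nhds hm)
  obtain ⟨N, hN⟩ := eventually_atTop.1 hev
  refine ⟨N, fun n hn => ?_⟩
  rw [dist_eq_norm]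
  by_contra hcon
  push_neg at hcon
  exact absurd (key (ξn n) hcon) (not_le.2 (hN n hn))
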